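/- For every integer k ≥ 0, the subsets A = {0, 1, 3+k, 4+k, 6+k} and B = {0, 1, 2, 4+k, 7+k} of ℤ_{10+2k} (elements taken modulo 10+2k) are Z-related: they are homometric (iv(A) = iv(B)) but not dihedrally equivalent (for every t ∈ ℤ_{10+2k}, B ≠ {a + t : a ∈ A} and B ≠ {−a + t : a ∈ A}). -/

import Mathlib

/-- The interval vector of a finite subset `A` of `ℤ_M`:
`iv A n = #{(a, b) ∈ A × A : b - a = n}`. -/
def iv {M : ℕ} (A : Finset (ZMod M)) (n : ZMod M) : ℕ :=
  ((A ×ˢ A).filter (fun p => p.2 - p.1 = n)).card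

/-- The set `{0, 1, 3+k, 4+k, 6+k}` viewed in `ℤ_{10+2k}`. -/
def setA (k : ℕ) : Finset (ZMod (10 + 2 * k)) :=
  {((0 : ℕ) : ZMod (10 + 2 * k)), ((1 : ℕ) : ZMod (10 + 2 * k)),
    ((3 + k : ℕ) : ZMod (10 + 2 * k)), ((4 + k : ℕ) : ZMod (10 + 2 * k)),
    ((6 + k : ℕ) : ZMod (10 + 2 * k))}

/-- The set `{0, 1, 2, 4+k, 7+k}` viewed in `ℤ_{10+2k}`. -/
def setB (k : ℕ) : Finset (ZMod (10 + 2 * k)) :=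
  {((0 : ℕ) : ZMod (10 + 2 * k)), ((1 : ℕ) : ZMod (10 + 2 * k)),
    ((2 : ℕ) : ZMod (10 + 2 * k)), ((4 + k : ℕ) : ZMod (10 + 2 * k)),
    ((7 + k : ℕ) : ZMod (10 + 2 * k))}

/-!
The interval vector counts the multiset of differences `b - a`. In any abelian group with
`10 x + 2 y = 0`, the sets `{0, x, 3x + y, 4x + y, 6x + y}` and `{0, x, 2x, 4x + y, 7x + y}` have the
same difference multiset: both are images of explicit configurations in `ℤ²` under `(a, b) ↦ a x + b y`,
whose kernel contains `(10, 2)`, and after shifting every difference with negative `y`-coordinate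
by `(10, 2)` the two integer multisets coincide. In `ℤ_{10+2k}` take `x = 1`, `y = k`.

They are not dihedrally equivalent because `B` contains the three consecutive residues `0, 1, 2` while
`A` contains no three consecutive residues, and translations and reflections preserve this property.
-/

namespace Multiset

variable {G H : Type*} [AddCommGroup G] [AddCommGroup H]

def diffs (s : Multiset G) : Multiset G :=
  (s ×ˢ s).map fun p => p.2 - p.1

theorem diffs_map (f : G →+ H) (s : Multiset G) : (s.map f).diffs = s.diffs.map f := by
  simp [diffs, SProd.sprod, Multiset.product, Multiset.map_bind, Multiset.bind_map]

theorem diffs_pumped_eq (x y : G) (h : 10 • x + 2 • y = 0) :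
    diffs {0, x, 3 • x + y, 4 • x + y, 6 • x + y} =
      diffs {0, x, 2 • x, 4 • x + y, 7 • x + y} := by
  set φ : ℤ × ℤ →+ G := (zmultiplesHom G x).coprod (zmultiplesHom G y)
  let ν (p : ℤ × ℤ) : ℤ × ℤ := if p.2 < 0 then p + (10, 2) else p
  have hφ : φ (10, 2) = 0 := by simpa [φ, ofNat_zsmul] using h
  have hν : φ ∘ ν = φ := by
    funext p
    by_cases hp : p.2 < 0 <;> simp [ν, hp, hφ]
  have hA : ({0, x, 3 • x + y, 4 • x + y, 6 • x + y} : Multiset G) =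
      map φ {(0, 0), (1, 0), (3, 1), (4, 1), (6, 1)} := by
    simp [φ, ofNat_zsmul]
  have hB : ({0, x, 2 • x, 4 • x + y, 7 • x + y} : Multiset G) =
      map φ {(0, 0), (1, 0), (2, 0), (4, 1), (7, 1)} := by
    simp [φ, ofNat_zsmul]
  have hdiffs : (diffs ({(0, 0), (1, 0), (3, 1), (4, 1), (6, 1)} : Multiset (ℤ × ℤ))).map ν =
      (diffs ({(0, 0), (1, 0), (2, 0), (4, 1), (7, 1)} : Multiset (ℤ × ℤ))).map ν := by
    decide
  rw [hA, hB, diffs_map, diffs_map, ← hν, ← map_map, ← map_map, hdiffs]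

end Multiset

open Multiset

theorem iv_eq_count_diffs {M : ℕ} (A : Finset (ZMod M)) (n : ZMod M) :
    iv A n = A.val.diffs.count n := by
  simp [iv, diffs, Finset.card_def, count_map, eq_comm]

section ThreeAP

variable {G : Type*} [AddCommGroup G] [DecidableEq G]

def HasThreeAP (g : G) (S : Finset G) : Prop :=
  ∃ c ∈ S, c + g ∈ S ∧ c + 2 • g ∈ S

theorem mem_image_add_right_iff {S : Finset G} {t c : G} :
    c ∈ S.image (· + t) ↔ c - t ∈ S := by
  simp [sub_eq_add_neg]

theorem mem_image_neg_add_iff {S : Finset G} {t c : G} :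
    c ∈ S.image (fun a => -a + t) ↔ t - c ∈ S := by
  constructor
  · intro h
    obtain ⟨a, ha, rfl⟩ := Finset.mem_image.mp h
    simpa using ha
  · exact fun h => Finset.mem_image.mpr ⟨t - c, h, by abel⟩

theorem HasThreeAP.of_image_add_right {g t : G} {S : Finset G}
    (h : HasThreeAP g (S.image (· + t))) : HasThreeAP g S := by
  obtain ⟨c, h0, h1, h2⟩ := h
  simp only [mem_image_add_right_iff] at h0 h1 h2
  exact ⟨c - t, h0, by rwa [sub_add_eq_add_sub], by rwa [sub_add_eq_add_sub]⟩

theorem HasThreeAP.of_image_neg_add {g t : G} {S : Finset G}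
    (h : HasThreeAP g (S.image (fun a => -a + t))) : HasThreeAP g S := by
  obtain ⟨c, h0, h1, h2⟩ := h
  simp only [mem_image_neg_add_iff] at h0 h1 h2
  refine ⟨t - (c + 2 • g), h2, ?_, ?_⟩
  · convert h1 using 1
    rw [two_nsmul]
    abel
  · convert h0 using 1
    abel

end ThreeAP

theorem ZMod.natCast_injOn_Iio (M : ℕ) : Set.InjOn (Nat.cast : ℕ → ZMod M) (Set.Iio M) := by
  intro a ha b hb h
  rwa [ZMod.natCast_eq_natCast_iff', Nat.mod_eq_of_lt ha, Nat.mod_eq_of_lt hb] at h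

section NatCast

variable {M : ℕ} {l : List ℕ}

theorem val_toFinset_map_natCast (hl : l.Nodup) (hlt : ∀ a ∈ l, a < M) :
    (l.map (Nat.cast : ℕ → ZMod M)).toFinset.val = (l.map Nat.cast : List (ZMod M)) := by
  rw [List.toFinset_val, List.Nodup.dedup]
  exact hl.map_on fun a ha b hb => ZMod.natCast_injOn_Iio M (hlt a ha) (hlt b hb)

theorem natCast_mem_map_natCast_iff {n : ℕ} (hlt : ∀ a ∈ l, a < M) (hn : n < M) :
    (n : ZMod M) ∈ l.map Nat.cast ↔ n ∈ l := by
  refine ⟨fun h => ?_, List.mem_map_of_mem⟩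
  obtain ⟨a, ha, hcast⟩ := List.mem_map.mp h
  rwa [← ZMod.natCast_injOn_Iio M (hlt a ha) hn hcast]

theorem hasThreeAP_one_map_natCast_iff (hlt : ∀ a ∈ l, a + 2 < M) :
    HasThreeAP 1 (l.map (Nat.cast : ℕ → ZMod M)).toFinset ↔ ∃ a ∈ l, a + 1 ∈ l ∧ a + 2 ∈ l := by
  have hl : ∀ a ∈ l, a < M := fun a ha => by have := hlt a ha; omega
  have hcast : ∀ a : ℕ, ((a : ZMod M) + 1 = ((a + 1 : ℕ) : ZMod M)) ∧
      ((a : ZMod M) + 2 • 1 = ((a + 2 : ℕ) : ZMod M)) := fun a => by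
    simp
  simp only [HasThreeAP, List.mem_toFinset]
  constructor
  · rintro ⟨c, h0, h1, h2⟩
    obtain ⟨a, ha, rfl⟩ := List.mem_map.mp h0
    rw [(hcast a).1, natCast_mem_map_natCast_iff hl (by have := hlt a ha; omega)] at h1
    rw [(hcast a).2, natCast_mem_map_natCast_iff hl (hlt a ha)] at h2
    exact ⟨a, ha, h1, h2⟩
  · rintro ⟨a, ha, h1, h2⟩
    refine ⟨a, List.mem_map_of_mem ha, ?_, ?_⟩
    · rw [(hcast a).1]
      exact List.mem_map_of_mem h1
    · rw [(hcast a).2]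
      exact List.mem_map_of_mem h2

end NatCast

theorem setA_eq (k : ℕ) :
    setA k = ([0, 1, 3 + k, 4 + k, 6 + k].map (Nat.cast : ℕ → ZMod (10 + 2 * k))).toFinset := by
  simp [setA]

theorem setB_eq (k : ℕ) :
    setB k = ([0, 1, 2, 4 + k, 7 + k].map (Nat.cast : ℕ → ZMod (10 + 2 * k))).toFinset := by
  simp [setB]

theorem iv_setA_eq_iv_setB (k : ℕ) : iv (setA k) = iv (setB k) := by
  have hM : 10 • (1 : ZMod (10 + 2 * k)) + 2 • (k : ZMod (10 + 2 * k)) = 0 := by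
    simp only [nsmul_eq_mul]
    exact_mod_cast ZMod.natCast_self (10 + 2 * k)
  have hA : (setA k).val = {0, 1, 3 • 1 + (k : ZMod (10 + 2 * k)), 4 • 1 + (k : ZMod (10 + 2 * k)),
      6 • 1 + (k : ZMod (10 + 2 * k))} := by
    rw [setA_eq, val_toFinset_map_natCast]
    · simp
      rfl
    · simp only [List.nodup_cons, List.mem_cons, List.not_mem_nil, List.nodup_nil, or_false,
        not_false_eq_true, and_true]
      omega
    · simp only [List.mem_cons, List.not_mem_nil, or_false, forall_eq_or_imp, forall_eq]
      omega
  have hB : (setB k).val = {0, 1, 2 • 1, 4 • 1 + (k : ZMod (10 + 2 * k)),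
      7 • 1 + (k : ZMod (10 + 2 * k))} := by
    rw [setB_eq, val_toFinset_map_natCast]
    · simp
      rfl
    · simp only [List.nodup_cons, List.mem_cons, List.not_mem_nil, List.nodup_nil, or_false,
        not_false_eq_true, and_true]
      omega
    · simp only [List.mem_cons, List.not_mem_nil, or_false, forall_eq_or_imp, forall_eq]
      omega
  funext n
  rw [iv_eq_count_diffs, iv_eq_count_diffs, hA, hB, diffs_pumped_eq _ _ hM]

theorem hasThreeAP_setB (k : ℕ) : HasThreeAP 1 (setB k) := by
  rw [setB_eq, hasThreeAP_one_map_natCast_iff]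
  · exact ⟨0, by simp⟩
  · simp only [List.mem_cons, List.not_mem_nil, or_false, forall_eq_or_imp, forall_eq]
    omega

theorem not_hasThreeAP_setA (k : ℕ) : ¬ HasThreeAP 1 (setA k) := by
  rw [setA_eq, hasThreeAP_one_map_natCast_iff]
  · rintro ⟨a, ha, h1, h2⟩
    simp only [List.mem_cons, List.not_mem_nil, or_false] at ha h1 h2
    omega
  · simp only [List.mem_cons, List.not_mem_nil, or_false, forall_eq_or_imp, forall_eq]
    omega

/-- For every `k ≥ 0`, the sets `{0, 1, 3+k, 4+k, 6+k}` and `{0, 1, 2, 4+k, 7+k}`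
are Z-related in `ℤ_{10+2k}`: homometric but not dihedrally equivalent. -/
theorem zrelated_pumped_family (k : ℕ) :
    iv (setA k) = iv (setB k) ∧
    ∀ t : ZMod (10 + 2 * k),
      setB k ≠ (setA k).image (fun a => a + t) ∧
      setB k ≠ (setA k).image (fun a => -a + t) := by
  refine ⟨iv_setA_eq_iv_setB k, fun t => ⟨fun h => ?_, fun h => ?_⟩⟩ <;>
    apply not_hasThreeAP_setA k
  · exact (h ▸ hasThreeAP_setB k).of_image_add_right
  · exact (h ▸ hasThreeAP_setB k).of_image_neg_add
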